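/- Let b₀ ∈ ℝ, and suppose the kernels H_{b₀}(·,·) and R_{b₀}(·,·;ξ) are EAD uniformly for ξ in a compact set K (i.e. |H_{b₀}(x,y)| ≤ c₁ e^{−c₂|x−y|} and sup_{ξ∈K} |R_{b₀}(x,y;ξ)| ≤ c₁ e^{−c₂|x−y|}). Define for b ∈ ℝ the operator T̃_b(ξ) by the kernel T̃_b(x,y;ξ) := e^{i δb φ(x,y)} Σ_z (e^{i δb fl(x,z,y)} − 1) H_{b₀}(x,z) R_{b₀}(z,y;ξ) with δb := b − b₀. Then there is a constant c_K > 0 such that for all b ∈ ℝ and all ξ ∈ K, the kernel satisfies |T̃_b(x,y;ξ)| ≤ c_K |δb| e^{−c₂'|x−y|} for some c₂' > 0, and consequently ‖T̃_b(ξ)‖ ≤ C_K |δb|. -/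

import Mathlib

/-- The symmetric-gauge magnetic phase φ(x,y) := (1/2)(y₁x₂ − x₁y₂) on ℝ². -/
noncomputable def phiE (x y : EuclideanSpace ℝ (Fin 2)) : ℝ :=
  (1 / 2) * (y 0 * x 1 - x 0 * y 1)

/-- The magnetic flux fl(x,z,y) := φ(x,z) + φ(z,y) + φ(y,x). -/
noncomputable def flE (x z y : EuclideanSpace ℝ (Fin 2)) : ℝ :=
  phiE x z + phiE z y + phiE y x

/-!
The phase `e^{iδb φ(x,y)}` has modulus one, and `|e^{iδb fl(x,z,y)} - 1| ≤ |δb| |fl(x,z,y)|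
≤ |δb| |x - z| |z - y|` since the flux is half a cross product. Half of the exponential decay
of `H_{b₀}(x,z) R_{b₀}(z,y;ξ)` absorbs the two linear factors; by the triangle inequality the other
half still dominates `e^{-c₂|x-y|/4} e^{-c₂|x-z|/4}`, which is summable in `z`. The resulting
majorant of the kernel is symmetric with uniformly bounded row sums, so the Schur test bounds
the operator norm.
-/

open Real

theorem sq_tsum_mul_le_tsum_mul_tsum_mul_sq {ι : Type*} {a t : ι → ℝ} (ha : ∀ i, 0 ≤ a i)
    (ht : ∀ i, 0 ≤ t i) (hsa : Summable a) (hsat : Summable fun i => a i * t i ^ 2) :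
    (∑' i, a i * t i) ^ 2 ≤ (∑' i, a i) * ∑' i, a i * t i ^ 2 := by
  have hsq : ∀ i, √(a i) ^ (2 : ℝ) = a i := fun i => by rw [rpow_two, sq_sqrt (ha i)]
  have hsq' : ∀ i, (√(a i) * t i) ^ (2 : ℝ) = a i * t i ^ 2 := fun i => by
    rw [rpow_two, mul_pow, sq_sqrt (ha i)]
  have hHolder := inner_le_Lp_mul_Lq_tsum_of_nonneg HolderConjugate.two_two
    (f := fun i => √(a i)) (g := fun i => √(a i) * t i) (fun i => sqrt_nonneg _)
    (fun i => mul_nonneg (sqrt_nonneg _) (ht i)) (by simpa only [hsq] using hsa)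
    (by simpa only [hsq'] using hsat)
  simp only [hsq, hsq', ← mul_assoc, mul_self_sqrt (ha _), ← sqrt_eq_rpow] at hHolder
  calc (∑' i, a i * t i) ^ 2 ≤ (√(∑' i, a i) * √(∑' i, a i * t i ^ 2)) ^ 2 :=
        pow_le_pow_left₀ (tsum_nonneg fun i => mul_nonneg (ha i) (ht i)) hHolder 2
    _ = _ := by
      rw [mul_pow, sq_sqrt (tsum_nonneg ha),
        sq_sqrt (tsum_nonneg fun i => mul_nonneg (ha i) (sq_nonneg _))]

theorem summable_and_tsum_tsum_le_of_colSum_le {ι κ : Type*} {k : ι → κ → ℝ} {w : κ → ℝ}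
    {S : ℝ} (hk : ∀ x y, 0 ≤ k x y) (hw : ∀ y, 0 ≤ w y) (hw_sum : Summable w)
    (hcol : ∀ y, Summable fun x => k x y) (hcol_le : ∀ y, ∑' x, k x y ≤ S) :
    (Summable fun x => ∑' y, k x y * w y) ∧ ∑' x, ∑' y, k x y * w y ≤ S * ∑' y, w y := by
  have hcol_bound : ∀ y, ∑' x, k x y * w y ≤ S * w y := fun y => by
    rw [tsum_mul_right]; exact mul_le_mul_of_nonneg_right (hcol_le y) (hw y)
  have hcol_sum : Summable fun y => ∑' x, k x y * w y :=
    (hw_sum.mul_left S).of_nonneg_of_le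
      (fun y => tsum_nonneg fun x => mul_nonneg (hk x y) (hw y)) hcol_bound
  have hcol_mul : ∀ y, Summable fun x => k x y * w y := fun y => (hcol y).mul_right (w y)
  have hprod' : Summable fun p : κ × ι => k p.2 p.1 * w p.1 :=
    (summable_prod_of_nonneg fun p => mul_nonneg (hk p.2 p.1) (hw p.1)).2 ⟨hcol_mul, hcol_sum⟩
  have hprod : Summable (Function.uncurry fun x y => k x y * w y) := hprod'.prod_symm
  refine ⟨hprod.prod, ?_⟩
  rw [← hprod.tsum_comm' hprod.prod_factor hcol_mul, ← tsum_mul_left]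
  exact hcol_sum.tsum_le_tsum hcol_bound (hw_sum.mul_left S)

theorem sq_norm_tsum_mul_le {κ 𝕜 : Type*} [RCLike 𝕜] {K ψ : κ → 𝕜} {k : κ → ℝ} {S M : ℝ}
    (hK : ∀ y, ‖K y‖ ≤ k y) (hk_sum : Summable k) (hk_le : ∑' y, k y ≤ S)
    (hψ : ∀ y, ‖ψ y‖ ≤ M) :
    ‖∑' y, K y * ψ y‖ ^ 2 ≤ S * ∑' y, k y * ‖ψ y‖ ^ 2 := by
  have hk : ∀ y, 0 ≤ k y := fun y => (norm_nonneg _).trans (hK y)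
  have hterm : ∀ y, ‖K y * ψ y‖ ≤ k y * ‖ψ y‖ := fun y => by
    rw [norm_mul]; exact mul_le_mul_of_nonneg_right (hK y) (norm_nonneg _)
  have hmaj : Summable fun y => k y * ‖ψ y‖ :=
    (hk_sum.mul_right M).of_nonneg_of_le (fun y => mul_nonneg (hk y) (norm_nonneg _))
      fun y => mul_le_mul_of_nonneg_left (hψ y) (hk y)
  have hmaj_sq : Summable fun y => k y * ‖ψ y‖ ^ 2 :=
    (hk_sum.mul_right (M ^ 2)).of_nonneg_of_le (fun y => mul_nonneg (hk y) (sq_nonneg _))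
      fun y => mul_le_mul_of_nonneg_left (pow_le_pow_left₀ (norm_nonneg _) (hψ y) 2) (hk y)
  have hnorm : Summable fun y => ‖K y * ψ y‖ :=
    hmaj.of_nonneg_of_le (fun y => norm_nonneg _) hterm
  calc ‖∑' y, K y * ψ y‖ ^ 2 ≤ (∑' y, k y * ‖ψ y‖) ^ 2 :=
        pow_le_pow_left₀ (norm_nonneg _)
          ((norm_tsum_le_tsum_norm hnorm).trans (hnorm.tsum_le_tsum hterm hmaj)) 2
    _ ≤ (∑' y, k y) * ∑' y, k y * ‖ψ y‖ ^ 2 :=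
        sq_tsum_mul_le_tsum_mul_tsum_mul_sq hk (fun y => norm_nonneg _) hk_sum hmaj_sq
    _ ≤ S * ∑' y, k y * ‖ψ y‖ ^ 2 :=
        mul_le_mul_of_nonneg_right hk_le (tsum_nonneg fun y => mul_nonneg (hk y) (sq_nonneg _))

open scoped ENNReal in
theorem lp_two_summable_and_norm_sq_eq_tsum {κ 𝕜 : Type*} [RCLike 𝕜] (ψ : lp (fun _ : κ => 𝕜) 2) :
    (Summable fun y => ‖ψ y‖ ^ 2) ∧ ‖ψ‖ ^ 2 = ∑' y, ‖ψ y‖ ^ 2 := by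
  have h2 : 0 < (2 : ℝ≥0∞).toReal := by norm_num
  have hsum := (lp.memℓp ψ).summable h2
  have hnorm := lp.norm_rpow_eq_tsum h2 ψ
  simp only [ENNReal.toReal_ofNat, rpow_two] at hsum hnorm
  exact ⟨hsum, hnorm⟩

theorem opNorm_le_of_rowSum_colSum_le {ι κ 𝕜 : Type*} [RCLike 𝕜] (K : ι → κ → 𝕜)
    (k : ι → κ → ℝ) {S : ℝ} (hS : 0 ≤ S) (hK : ∀ x y, ‖K x y‖ ≤ k x y)
    (hrow : ∀ x, Summable (k x)) (hrow_le : ∀ x, ∑' y, k x y ≤ S)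
    (hcol : ∀ y, Summable fun x => k x y) (hcol_le : ∀ y, ∑' x, k x y ≤ S)
    (T : lp (fun _ : κ => 𝕜) 2 →L[𝕜] lp (fun _ : ι => 𝕜) 2)
    (hT : ∀ ψ x, T ψ x = ∑' y, K x y * ψ y) :
    ‖T‖ ≤ S := by
  refine T.opNorm_le_bound hS fun ψ => ?_
  obtain ⟨hψ_sum, hψ_norm⟩ := lp_two_summable_and_norm_sq_eq_tsum ψ
  obtain ⟨hTψ_sum, hTψ_norm⟩ := lp_two_summable_and_norm_sq_eq_tsum (T ψ)
  have hpoint : ∀ x, ‖T ψ x‖ ^ 2 ≤ S * ∑' y, k x y * ‖ψ y‖ ^ 2 := fun x => by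
    rw [hT]
    exact sq_norm_tsum_mul_le (hK x) (hrow x) (hrow_le x)
      fun y => lp.norm_apply_le_norm two_ne_zero ψ y
  obtain ⟨hdouble_sum, hdouble⟩ := summable_and_tsum_tsum_le_of_colSum_le
    (fun x y => (norm_nonneg _).trans (hK x y)) (fun y => sq_nonneg ‖ψ y‖) hψ_sum hcol hcol_le
  refine le_of_pow_le_pow_left₀ two_ne_zero (by positivity) ?_
  calc ‖T ψ‖ ^ 2 = ∑' x, ‖T ψ x‖ ^ 2 := hTψ_norm
    _ ≤ ∑' x, S * ∑' y, k x y * ‖ψ y‖ ^ 2 :=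
        hTψ_sum.tsum_le_tsum hpoint (hdouble_sum.mul_left S)
    _ ≤ S * (S * ‖ψ‖ ^ 2) := by
        rw [tsum_mul_left, hψ_norm]; exact mul_le_mul_of_nonneg_left hdouble hS
    _ = (S * ‖ψ‖) ^ 2 := by ring

theorem mul_exp_neg_mul_le {c : ℝ} (hc : 0 < c) (t : ℝ) :
    t * exp (-c * t) ≤ 2 / c * exp (-(c / 2) * t) := by
  have ht : t ≤ 2 / c * exp (c / 2 * t) := by
    calc t = 2 / c * (c / 2 * t) := by field_simp
      _ ≤ 2 / c * exp (c / 2 * t) := by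
        gcongr; linarith [add_one_le_exp (c / 2 * t)]
  calc t * exp (-c * t) ≤ 2 / c * exp (c / 2 * t) * exp (-c * t) := by gcongr
    _ = 2 / c * exp (-(c / 2) * t) := by rw [mul_assoc, ← exp_add]; ring_nf

theorem mul_exp_neg_mul_mul_exp_neg_le {c r s t : ℝ} (hc : 0 < c) (ht : 0 ≤ t)
    (hr : r ≤ s + t) :
    s * exp (-c * s) * (t * exp (-c * t)) ≤ (2 / c) ^ 2 * exp (-(c / 4) * r) * exp (-(c / 4) * s) :=
  calc s * exp (-c * s) * (t * exp (-c * t))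
      ≤ 2 / c * exp (-(c / 2) * s) * (2 / c * exp (-(c / 2) * t)) :=
        mul_le_mul (mul_exp_neg_mul_le hc s) (mul_exp_neg_mul_le hc t) (by positivity)
          (by positivity)
    _ = (2 / c) ^ 2 * exp (-(c / 2) * (s + t)) := by rw [mul_add, exp_add]; ring
    _ ≤ (2 / c) ^ 2 * exp (-(c / 4) * r) * exp (-(c / 4) * s) := by
        rw [mul_assoc, ← exp_add]; gcongr; nlinarith

theorem norm_tsum_mul_mul_le_of_exp_decay {ι E 𝕜 : Type*} [PseudoMetricSpace E] [RCLike 𝕜]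
    (p : ι → E) (x y : E) {f H R : ι → 𝕜} {c₁ c₂ δ S : ℝ} (hc₂ : 0 < c₂) (hδ : 0 ≤ δ)
    (hf : ∀ z, ‖f z‖ ≤ δ * (dist x (p z) * dist (p z) y))
    (hH : ∀ z, ‖H z‖ ≤ c₁ * exp (-c₂ * dist x (p z)))
    (hR : ∀ z, ‖R z‖ ≤ c₁ * exp (-c₂ * dist (p z) y))
    (hsum : Summable fun z => exp (-(c₂ / 4) * dist x (p z)))
    (hS : ∑' z, exp (-(c₂ / 4) * dist x (p z)) ≤ S) :
    ‖∑' z, f z * H z * R z‖ ≤ c₁ ^ 2 * (2 / c₂) ^ 2 * S * δ * exp (-(c₂ / 4) * dist x y) := by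
  set C := c₁ ^ 2 * (2 / c₂) ^ 2 * δ * exp (-(c₂ / 4) * dist x y)
  have hterm : ∀ z, ‖f z * H z * R z‖ ≤ C * exp (-(c₂ / 4) * dist x (p z)) := fun z => by
    have hH_nonneg : 0 ≤ c₁ * exp (-c₂ * dist x (p z)) := (norm_nonneg _).trans (hH z)
    calc ‖f z * H z * R z‖
        ≤ δ * (dist x (p z) * dist (p z) y) * (c₁ * exp (-c₂ * dist x (p z))) *
            (c₁ * exp (-c₂ * dist (p z) y)) := by
          rw [norm_mul, norm_mul]; gcongr; exacts [hf z, hH z, hR z]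
      _ = c₁ ^ 2 * δ * (dist x (p z) * exp (-c₂ * dist x (p z)) *
            (dist (p z) y * exp (-c₂ * dist (p z) y))) := by ring
      _ ≤ c₁ ^ 2 * δ * ((2 / c₂) ^ 2 * exp (-(c₂ / 4) * dist x y) *
            exp (-(c₂ / 4) * dist x (p z))) := by
          refine mul_le_mul_of_nonneg_left ?_ (by positivity)
          exact mul_exp_neg_mul_mul_exp_neg_le hc₂ dist_nonneg (dist_triangle x (p z) y)
      _ = C * exp (-(c₂ / 4) * dist x (p z)) := by ring
  have hmaj : Summable fun z => C * exp (-(c₂ / 4) * dist x (p z)) := hsum.mul_left C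
  have hnorm : Summable fun z => ‖f z * H z * R z‖ :=
    hmaj.of_nonneg_of_le (fun z => norm_nonneg _) hterm
  calc ‖∑' z, f z * H z * R z‖ ≤ ∑' z, C * exp (-(c₂ / 4) * dist x (p z)) :=
        (norm_tsum_le_tsum_norm hnorm).trans (hnorm.tsum_le_tsum hterm hmaj)
    _ ≤ C * S := by rw [tsum_mul_left]; gcongr
    _ = _ := by ring

theorem abs_flE_le (x z y : EuclideanSpace ℝ (Fin 2)) :
    |flE x z y| ≤ dist x z * dist z y := by
  have hdist : ∀ u v : EuclideanSpace ℝ (Fin 2), dist u v = √((u 0 - v 0) ^ 2 + (u 1 - v 1) ^ 2) :=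
    fun u v => by simp [EuclideanSpace.dist_eq, Fin.sum_univ_two, Real.dist_eq, sq_abs]
  have hlagrange : (2 * flE x z y) ^ 2 ≤
      ((x 0 - z 0) ^ 2 + (x 1 - z 1) ^ 2) * ((z 0 - y 0) ^ 2 + (z 1 - y 1) ^ 2) := by
    simp only [flE, phiE]
    nlinarith [sq_nonneg ((x 0 - z 0) * (z 0 - y 0) + (x 1 - z 1) * (z 1 - y 1))]
  calc |flE x z y| ≤ 2 * |flE x z y| := by linarith [abs_nonneg (flE x z y)]
    _ = √((2 * flE x z y) ^ 2) := by rw [sqrt_sq_eq_abs, abs_mul, abs_two]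
    _ ≤ √(((x 0 - z 0) ^ 2 + (x 1 - z 1) ^ 2) * ((z 0 - y 0) ^ 2 + (z 1 - y 1) ^ 2)) :=
        sqrt_le_sqrt hlagrange
    _ = dist x z * dist z y := by rw [hdist, hdist, sqrt_mul (by positivity)]

theorem norm_cexp_I_mul_ofReal_mul (δ t : ℝ) : ‖Complex.exp (Complex.I * δ * t)‖ = 1 := by
  rw [mul_assoc, ← Complex.ofReal_mul, Complex.norm_exp_I_mul_ofReal]

theorem norm_cexp_I_mul_ofReal_mul_sub_one_le (δ t : ℝ) :
    ‖Complex.exp (Complex.I * δ * t) - 1‖ ≤ |δ| * |t| := by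
  rw [mul_assoc, ← Complex.ofReal_mul, ← abs_mul]
  exact norm_exp_I_mul_ofReal_sub_one_le

/-- The kernel `T̃_b(x,y;ξ)` with `δ = b - b₀` and `R = R_{b₀}(·,·;ξ)`. -/
noncomputable def tildeTKernel {Λ : Type*} (pos : Λ → EuclideanSpace ℝ (Fin 2))
    (H R : Λ → Λ → ℂ) (δ : ℝ) (x y : Λ) : ℂ :=
  Complex.exp (Complex.I * δ * phiE (pos x) (pos y)) *
    ∑' z, (Complex.exp (Complex.I * δ * flE (pos x) (pos z) (pos y)) - 1) * H x z * R z y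

theorem norm_tildeTKernel_le {Λ : Type*} (pos : Λ → EuclideanSpace ℝ (Fin 2))
    {H R : Λ → Λ → ℂ} {c₁ c₂ S : ℝ} (hc₂ : 0 < c₂)
    (hH : ∀ x y, ‖H x y‖ ≤ c₁ * exp (-c₂ * dist (pos x) (pos y)))
    (hR : ∀ x y, ‖R x y‖ ≤ c₁ * exp (-c₂ * dist (pos x) (pos y)))
    (hsum : ∀ x, Summable fun y => exp (-(c₂ / 4) * dist (pos x) (pos y)))
    (hS : ∀ x, ∑' y, exp (-(c₂ / 4) * dist (pos x) (pos y)) ≤ S) (δ : ℝ) (x y : Λ) :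
    ‖tildeTKernel pos H R δ x y‖ ≤
      c₁ ^ 2 * (2 / c₂) ^ 2 * S * |δ| * exp (-(c₂ / 4) * dist (pos x) (pos y)) := by
  rw [tildeTKernel, norm_mul, norm_cexp_I_mul_ofReal_mul, one_mul]
  refine norm_tsum_mul_mul_le_of_exp_decay pos (pos x) (pos y) hc₂ (abs_nonneg δ)
    (fun z => ?_) (hH x) (fun z => hR z y) (hsum x) (hS x)
  exact (norm_cexp_I_mul_ofReal_mul_sub_one_le _ _).trans
    (mul_le_mul_of_nonneg_left (abs_flE_le _ _ _) (abs_nonneg δ))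

theorem tilde_T_bound_general (Λ : Type) (pos : Λ → EuclideanSpace ℝ (Fin 2))
    (hgeo : ∀ c : ℝ, 0 < c → ∃ S : ℝ, ∀ x : Λ,
      Summable (fun y : Λ => Real.exp (-c * dist (pos x) (pos y))) ∧
      ∑' y : Λ, Real.exp (-c * dist (pos x) (pos y)) ≤ S)
    (b₀ : ℝ) (K : Set ℂ) (Hk : Λ → Λ → ℂ) (Rk : ℂ → Λ → Λ → ℂ)
    (c₁ c₂ : ℝ) (hc₁ : 0 < c₁) (hc₂ : 0 < c₂)
    (hH : ∀ x y : Λ, ‖Hk x y‖ ≤ c₁ * Real.exp (-c₂ * dist (pos x) (pos y)))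
    (hR : ∀ ξ ∈ K, ∀ x y : Λ,
      ‖Rk ξ x y‖ ≤ c₁ * Real.exp (-c₂ * dist (pos x) (pos y))) :
    ∃ cK c₂' CK : ℝ, 0 < cK ∧ 0 < c₂' ∧ 0 < CK ∧
      ∀ (b : ℝ), ∀ ξ ∈ K,
        (∀ x y : Λ,
          ‖Complex.exp (Complex.I * (b - b₀) * phiE (pos x) (pos y)) *
              ∑' z : Λ, (Complex.exp (Complex.I * (b - b₀) * flE (pos x) (pos z) (pos y)) - 1) *
                Hk x z * Rk ξ z y‖ ≤
            cK * |b - b₀| * Real.exp (-c₂' * dist (pos x) (pos y))) ∧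
        (∀ T : lp (fun _ : Λ => ℂ) 2 →L[ℂ] lp (fun _ : Λ => ℂ) 2,
          (∀ (ψ : lp (fun _ : Λ => ℂ) 2) (x : Λ),
            T ψ x = ∑' y : Λ,
              (Complex.exp (Complex.I * (b - b₀) * phiE (pos x) (pos y)) *
                ∑' z : Λ, (Complex.exp (Complex.I * (b - b₀) * flE (pos x) (pos z) (pos y)) - 1) *
                  Hk x z * Rk ξ z y) * ψ y) →
          ‖T‖ ≤ CK * |b - b₀|) := by
  obtain ⟨S₀, hS₀⟩ := hgeo (c₂ / 4) (by positivity)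
  set S := max S₀ 1
  have hS : 0 < S := one_pos.trans_le (le_max_right _ _)
  have hrow : ∀ x, Summable fun y => exp (-(c₂ / 4) * dist (pos x) (pos y)) :=
    fun x => (hS₀ x).1
  have hrow_le : ∀ x, ∑' y, exp (-(c₂ / 4) * dist (pos x) (pos y)) ≤ S :=
    fun x => (hS₀ x).2.trans (le_max_left _ _)
  have hcol : ∀ y, Summable fun x => exp (-(c₂ / 4) * dist (pos x) (pos y)) := fun y => by
    simpa only [dist_comm] using hrow y
  have hcol_le : ∀ y, ∑' x, exp (-(c₂ / 4) * dist (pos x) (pos y)) ≤ S := fun y => by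
    simpa only [dist_comm] using hrow_le y
  set A := c₁ ^ 2 * (2 / c₂) ^ 2
  refine ⟨A * S, c₂ / 4, A * S * S, by positivity, by positivity, by positivity,
    fun b ξ hξ => ?_⟩
  simp only [← Complex.ofReal_sub]
  have hker := norm_tildeTKernel_le pos hc₂ hH (hR ξ hξ) hrow hrow_le (b - b₀)
  refine ⟨hker, fun T hT => ?_⟩
  have hC : 0 ≤ A * S * |b - b₀| := by positivity
  refine (opNorm_le_of_rowSum_colSum_le _ _ (S := A * S * |b - b₀| * S) (by positivity) hker
    (fun x => (hrow x).mul_left _) (fun x => ?_) (fun y => (hcol y).mul_left _) (fun y => ?_)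
    T hT).trans_eq (by ring)
  · rw [tsum_mul_left]; exact mul_le_mul_of_nonneg_left (hrow_le x) hC
  · rw [tsum_mul_left]; exact mul_le_mul_of_nonneg_left (hcol_le y) hC

/-- Bound on the kernel of `T̃_b(ξ)` and on its operator norm: if the kernels `H_{b₀}` and
`R_{b₀}(·,·;ξ)` (uniformly for `ξ ∈ K`) are exponentially almost diagonal, then the kernel
`T̃_b(x,y;ξ) = e^{iδbφ(x,y)} Σ_z (e^{iδb fl(x,z,y)} − 1) H_{b₀}(x,z) R_{b₀}(z,y;ξ)`
obeys `|T̃_b(x,y;ξ)| ≤ c_K |δb| e^{−c₂'|x−y|}` and `‖T̃_b(ξ)‖ ≤ C_K |δb|`. -/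
theorem tilde_T_bound (Λ : Type) [Countable Λ] (pos : Λ → EuclideanSpace ℝ (Fin 2))
    (hgeo : ∀ c : ℝ, 0 < c → ∃ S : ℝ, ∀ x : Λ,
      Summable (fun y : Λ => Real.exp (-c * dist (pos x) (pos y))) ∧
      ∑' y : Λ, Real.exp (-c * dist (pos x) (pos y)) ≤ S)
    (b₀ : ℝ) (K : Set ℂ) (Hk : Λ → Λ → ℂ) (Rk : ℂ → Λ → Λ → ℂ)
    (c₁ c₂ : ℝ) (hc₁ : 0 < c₁) (hc₂ : 0 < c₂)
    (hH : ∀ x y : Λ, ‖Hk x y‖ ≤ c₁ * Real.exp (-c₂ * dist (pos x) (pos y)))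
    (hR : ∀ ξ ∈ K, ∀ x y : Λ,
      ‖Rk ξ x y‖ ≤ c₁ * Real.exp (-c₂ * dist (pos x) (pos y))) :
    ∃ cK c₂' CK : ℝ, 0 < cK ∧ 0 < c₂' ∧ 0 < CK ∧
      ∀ (b : ℝ), ∀ ξ ∈ K,
        (∀ x y : Λ,
          ‖Complex.exp (Complex.I * (b - b₀) * phiE (pos x) (pos y)) *
              ∑' z : Λ, (Complex.exp (Complex.I * (b - b₀) * flE (pos x) (pos z) (pos y)) - 1) *
                Hk x z * Rk ξ z y‖ ≤
            cK * |b - b₀| * Real.exp (-c₂' * dist (pos x) (pos y))) ∧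
        (∀ T : lp (fun _ : Λ => ℂ) 2 →L[ℂ] lp (fun _ : Λ => ℂ) 2,
          (∀ (ψ : lp (fun _ : Λ => ℂ) 2) (x : Λ),
            T ψ x = ∑' y : Λ,
              (Complex.exp (Complex.I * (b - b₀) * phiE (pos x) (pos y)) *
                ∑' z : Λ, (Complex.exp (Complex.I * (b - b₀) * flE (pos x) (pos z) (pos y)) - 1) *
                  Hk x z * Rk ξ z y) * ψ y) →
          ‖T‖ ≤ CK * |b - b₀|) :=
  tilde_T_bound_general Λ pos hgeo b₀ K Hk Rk c₁ c₂ hc₁ hc₂ hH hR
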